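/- Cycle-CTL* is not invariant under (ordinary) bisimulation: there exist Kripke structures K_1 and K_2, a bisimulation B ⊆ W_1 × W_2 between them, and a Cycle-CTL* state formula (namely E^cycle ⊤) such that K_1 ⊨ E^cycle ⊤ and K_2 ⊭ E^cycle ⊤. Witnesses: K_1 the one-world structure with a self-loop and K_2 the structure with worlds ℕ, initial world 0, transitions {(n, n+1) : n ∈ ℕ}, with equal constant labelings, are bisimilar via the total relation. -/

import Mathlib

/-!
Both structures are serial with constant, equal labels, so any two of their worlds are
bisimilar. Since `⊤` holds on every path, `E^cycle ⊤` only asks for a cycle: the self-loop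
is one, while a path of the chain moves from `n` to `n + i` in `i` steps and never returns.
-/

namespace CycleCTL

universe u v

/-- A Kripke structure over a set `AP` of atomic propositions. -/
structure Kripke (AP : Type) : Type (u + 1) where
  World : Type u
  init : World
  R : World → World → Prop
  label : World → Set AP
  serial : ∀ w, ∃ v, R w v

variable {AP : Type}

/-- An (infinite) path of a Kripke structure. -/
def IsPath (K : Kripke.{u} AP) (π : ℕ → K.World) : Prop :=
  ∀ i, K.R (π i) (π (i + 1))

/-- A cycle: a path visiting its first world infinitely often. -/
def IsCycle (K : Kripke.{u} AP) (π : ℕ → K.World) : Prop :=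
  IsPath K π ∧ ∀ i, ∃ j, i < j ∧ π j = π 0

mutual
  /-- State formulas of Cycle-CTL*. -/
  inductive StateForm (AP : Type) : Type where
    | atom : AP → StateForm AP
    | not  : StateForm AP → StateForm AP
    | and  : StateForm AP → StateForm AP → StateForm AP
    | or   : StateForm AP → StateForm AP → StateForm AP
    | E    : PathForm AP → StateForm AP
    | A    : PathForm AP → StateForm AP
    | Ec   : PathForm AP → StateForm AP
    | Ac   : PathForm AP → StateForm AP
  /-- Path formulas of Cycle-CTL*. -/
  inductive PathForm (AP : Type) : Type where
    | state : StateForm AP → PathForm AP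
    | not   : PathForm AP → PathForm AP
    | and   : PathForm AP → PathForm AP → PathForm AP
    | or    : PathForm AP → PathForm AP → PathForm AP
    | next  : PathForm AP → PathForm AP
    | untl  : PathForm AP → PathForm AP → PathForm AP
end

mutual
  /-- Satisfaction of a state formula at a world. -/
  def SatS (K : Kripke.{u} AP) : K.World → StateForm AP → Prop
    | w, .atom p => p ∈ K.label w
    | w, .not φ => ¬ SatS K w φ
    | w, .and φ₁ φ₂ => SatS K w φ₁ ∧ SatS K w φ₂
    | w, .or φ₁ φ₂ => SatS K w φ₁ ∨ SatS K w φ₂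
    | w, .E ψ => ∃ π, IsPath K π ∧ π 0 = w ∧ SatP K π 0 ψ
    | w, .A ψ => ∀ π, IsPath K π → π 0 = w → SatP K π 0 ψ
    | w, .Ec ψ => ∃ π, IsCycle K π ∧ π 0 = w ∧ SatP K π 0 ψ
    | w, .Ac ψ => ∀ π, IsCycle K π → π 0 = w → SatP K π 0 ψ
  /-- Satisfaction of a path formula on a path at a position. -/
  def SatP (K : Kripke.{u} AP) : (ℕ → K.World) → ℕ → PathForm AP → Prop
    | π, i, .state φ => SatS K (π i) φ
    | π, i, .not ψ => ¬ SatP K π i ψ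
    | π, i, .and ψ₁ ψ₂ => SatP K π i ψ₁ ∧ SatP K π i ψ₂
    | π, i, .or ψ₁ ψ₂ => SatP K π i ψ₁ ∨ SatP K π i ψ₂
    | π, i, .next ψ => SatP K π (i + 1) ψ
    | π, i, .untl ψ₁ ψ₂ => ∃ k, SatP K π (i + k) ψ₂ ∧ ∀ j < k, SatP K π (i + j) ψ₁
end

/-- `K ⊨ φ` : satisfaction at the initial world. -/
def Sat (K : Kripke.{u} AP) (φ : StateForm AP) : Prop := SatS K K.init φ

/-- `⊤` as a path formula, abbreviating `p ∨ ¬p`. -/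
def topP (p : AP) : PathForm AP := .or (.state (.atom p)) (.not (.state (.atom p)))

/-- `F ψ` abbreviates `⊤ U ψ`. -/
def FP (p : AP) (ψ : PathForm AP) : PathForm AP := .untl (topP p) ψ

/-- `G ψ` abbreviates `¬(⊤ U ¬ψ)`. -/
def GP (p : AP) (ψ : PathForm AP) : PathForm AP := .not (FP p (.not ψ))


/-- An (ordinary) bisimulation between two Kripke structures. -/
def IsBisim (K₁ : Kripke.{u} AP) (K₂ : Kripke.{v} AP)
    (B : K₁.World → K₂.World → Prop) : Prop :=
  B K₁.init K₂.init ∧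
  ∀ w₁ w₂, B w₁ w₂ →
    (K₁.label w₁ = K₂.label w₂) ∧
    (∀ v₁, K₁.R w₁ v₁ → ∃ v₂, K₂.R w₂ v₂ ∧ B v₁ v₂) ∧
    (∀ v₂, K₂.R w₂ v₂ → ∃ v₁, K₁.R w₁ v₁ ∧ B v₁ v₂)

/-- The one-world Kripke structure whose only transition is a self-loop. -/
def loopK (AP : Type) (S : Set AP) : Kripke.{0} AP where
  World := Unit
  init := ()
  R := fun _ _ => True
  label := fun _ => S
  serial := fun _ => ⟨(), trivial⟩

/-- The Kripke structure with worlds `ℕ`, initial world `0`, transitions `n → n+1`. -/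
def chainK (AP : Type) (L : ℕ → Set AP) : Kripke.{0} AP where
  World := ℕ
  init := 0
  R := fun n m => m = n + 1
  label := L
  serial := fun n => ⟨n + 1, rfl⟩

theorem isBisim_total {K₁ : Kripke.{u} AP} {K₂ : Kripke.{v} AP}
    (hlabel : ∀ w₁ w₂, K₁.label w₁ = K₂.label w₂) : IsBisim K₁ K₂ (fun _ _ => True) := by
  refine ⟨trivial, fun w₁ w₂ _ => ⟨hlabel w₁ w₂, fun _ _ => ?_, fun _ _ => ?_⟩⟩
  · obtain ⟨v₂, hv₂⟩ := K₂.serial w₂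
    exact ⟨v₂, hv₂, trivial⟩
  · obtain ⟨v₁, hv₁⟩ := K₁.serial w₁
    exact ⟨v₁, hv₁, trivial⟩

theorem isCycle_const {K : Kripke.{u} AP} {w : K.World} (hw : K.R w w) :
    IsCycle K (fun _ => w) :=
  ⟨fun _ => hw, fun i => ⟨i + 1, i.lt_succ_self, rfl⟩⟩

theorem satP_topP (K : Kripke.{u} AP) (π : ℕ → K.World) (i : ℕ) (p : AP) :
    SatP K π i (topP p) :=
  em (p ∈ K.label (π i))

theorem satS_Ec_topP_iff {K : Kripke.{u} AP} {w : K.World} {p : AP} :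
    SatS K w (.Ec (topP p)) ↔ ∃ π, IsCycle K π ∧ π 0 = w := by
  simp only [SatS, satP_topP, and_true]

theorem chainK_path_apply {L : ℕ → Set AP} {π : ℕ → ℕ} (hπ : IsPath (chainK AP L) π) (i : ℕ) :
    π i = π 0 + i := by
  induction i with
  | zero => rfl
  | succ i ih => rw [hπ i, ih, add_assoc]

theorem chainK_not_isCycle (L : ℕ → Set AP) (π : ℕ → ℕ) : ¬ IsCycle (chainK AP L) π := by
  rintro ⟨hπ, hreturn⟩
  obtain ⟨j, hj, hπj : π j = π 0⟩ := hreturn 0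
  have hshift : π j = π 0 + j := chainK_path_apply hπ j
  omega

/-- Cycle-CTL* is not invariant under ordinary bisimulation: the self-loop
structure and the infinite chain (with equal constant labelings) are bisimilar via the total
relation, yet `E^cycle ⊤` holds in the former and fails in the latter. -/
theorem stmt5 {AP : Type} (p : AP) (S : Set AP) :
    IsBisim (loopK AP S) (chainK AP (fun _ => S)) (fun _ _ => True) ∧
    Sat (loopK AP S) (.Ec (topP p)) ∧
    ¬ Sat (chainK AP (fun _ => S)) (.Ec (topP p)) := by
  refine ⟨isBisim_total fun _ _ => rfl, satS_Ec_topP_iff.2 ⟨_, isCycle_const trivial, rfl⟩, fun h => ?_⟩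
  obtain ⟨π, hπ, -⟩ := satS_Ec_topP_iff.1 h
  exact chainK_not_isCycle _ π hπ

end CycleCTL
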